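/- Every linearly ordered set ⟨A, <⟩ admits a partial order <_s such that ⟨A, <, <_s⟩ is a lexicographically ordered binary tree. -/

import Mathlib

universe u

section Tree

variable {α : Type u}

/-- The set of strict tree-predecessors of `x` under the relation `s`. -/
def treePred (s : α → α → Prop) (x : α) : Set α := {y | s y x}

/-- `⟨α, s⟩` is a tree: `s` is a strict partial order each of whose predecessor
sets is well-ordered by `s`. -/
structure IsTreeOrd (s : α → α → Prop) : Prop where
  irrefl : ∀ x, ¬ s x x
  trans : ∀ {x y z}, s x y → s y z → s x z
  predWO : ∀ x : α, IsWellOrder (treePred s x) fun a b => s a.1 b.1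

/-- The tree-rank of `x`: the order type of its set of predecessors. -/
noncomputable def treeRank (s : α → α → Prop) (h : IsTreeOrd s) (x : α) : Ordinal :=
  @Ordinal.type (treePred s x) (fun a b => s a.1 b.1) (h.predWO x)

/-- `y` is an immediate successor of `x`. -/
def IsImmSucc (s : α → α → Prop) (h : IsTreeOrd s) (x y : α) : Prop :=
  s x y ∧ treeRank s h y = treeRank s h x + 1

/-- `C` is a chain (a subclass totally ordered by `s`). -/
def IsTreeChain (s : α → α → Prop) (C : Set α) : Prop :=
  ∀ x ∈ C, ∀ y ∈ C, x ≠ y → s x y ∨ s y x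

/-- `C` is a chain of limit length. -/
def IsLimitChain (s : α → α → Prop) (C : Set α) : Prop :=
  IsTreeChain s C ∧ ∃ hwo : IsWellOrder C fun a b => s a.1 b.1,
    (@Ordinal.type C (fun a b => s a.1 b.1) hwo) |> Order.IsSuccLimit

/-- `y` is an immediate successor of the chain `C`. -/
def IsChainImmSucc (s : α → α → Prop) (h : IsTreeOrd s) (C : Set α) (y : α) : Prop :=
  (∀ x ∈ C, s x y) ∧
    IsLeast {o : Ordinal | ∀ x ∈ C, treeRank s h x < o} (treeRank s h y)

/-- `⟨α, s⟩` is a binary tree. -/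
structure IsBinaryTree (s : α → α → Prop) : Prop where
  toIsTreeOrd : IsTreeOrd s
  succ_binary : ∀ x a b c : α, IsImmSucc s toIsTreeOrd x a → IsImmSucc s toIsTreeOrd x b →
    IsImmSucc s toIsTreeOrd x c → a = b ∨ a = c ∨ b = c
  chain_succ_unique : ∀ C : Set α, IsLimitChain s C → ∀ y z : α,
    IsChainImmSucc s toIsTreeOrd C y → IsChainImmSucc s toIsTreeOrd C z → y = z

variable [LinearOrder α]

/-- `L_s(x)`: the predecessors of `x` lying below `x`. -/
def Lopts (s : α → α → Prop) (x : α) : Set α := {a | s a x ∧ a < x}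

/-- `R_s(x)`: the predecessors of `x` lying above `x`. -/
def Ropts (s : α → α → Prop) (x : α) : Set α := {a | s a x ∧ x < a}

/-- `⟨α, <, s⟩` is a lexicographically ordered binary tree. -/
structure IsLexBinTree (s : α → α → Prop) : Prop where
  toIsBinaryTree : IsBinaryTree s
  lex : ∀ x y : α, x ≠ y →
    ((¬ s x y ∧ ¬ s y x) ↔ ∃ z, s z x ∧ s z y ∧ (x < z ∧ z < y ∨ y < z ∧ z < x))

/-- `x = {L | R}`: `x` is the simplest element lying between `L` and `R`. -/
def IsSimplest (s : α → α → Prop) (L R : Set α) (x : α) : Prop :=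
  (∀ l ∈ L, l < x) ∧ (∀ r ∈ R, x < r) ∧
    ∀ y, y ≠ x → (∀ l ∈ L, l < y) → (∀ r ∈ R, y < r) → s x y

/-- `B` is an initial subtree: it is closed under `s`-predecessors. -/
def IsInitialSubtree (s : α → α → Prop) (B : Set α) : Prop :=
  ∀ x ∈ B, ∀ y, s y x → y ∈ B

end Tree

/-- s-hierarchical ordered group. -/
structure IsSHGroup (α : Type u) [AddCommGroup α] [LinearOrder α] [IsOrderedAddMonoid α] (s : α → α → Prop) : Prop where
  lexBin : IsLexBinTree s
  add_eq : ∀ x y : α, IsSimplest s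
    ({z | ∃ x' ∈ Lopts s x, z = x' + y} ∪ {z | ∃ y' ∈ Lopts s y, z = x + y'})
    ({z | ∃ x'' ∈ Ropts s x, z = x'' + y} ∪ {z | ∃ y'' ∈ Ropts s y, z = x + y''})
    (x + y)

/-- s-hierarchical ordered domain. -/
structure IsSHDomain (α : Type u) [CommRing α] [LinearOrder α] [IsStrictOrderedRing α] (s : α → α → Prop) : Prop where
  toIsSHGroup : IsSHGroup α s
  mul_eq : ∀ x y : α, IsSimplest s
    ({z | ∃ x' ∈ Lopts s x, ∃ y' ∈ Lopts s y, z = x' * y + x * y' - x' * y'} ∪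
     {z | ∃ x'' ∈ Ropts s x, ∃ y'' ∈ Ropts s y, z = x'' * y + x * y'' - x'' * y''})
    ({z | ∃ x' ∈ Lopts s x, ∃ y'' ∈ Ropts s y, z = x' * y + x * y'' - x' * y''} ∪
     {z | ∃ x'' ∈ Ropts s x, ∃ y' ∈ Lopts s y, z = x'' * y + x * y' - x'' * y'})
    (x * y)

/-- s-hierarchical ordered field. -/
def IsSHField (α : Type u) [Field α] [LinearOrder α] [IsStrictOrderedRing α] (s : α → α → Prop) : Prop :=
  IsSHDomain α s

section Hahn

variable {Γ : Type*} [LinearOrder Γ]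

/-- The series `r·t^y` in `ℝ((t^Γ))` (represented with exponents in `Γᵒᵈ`, so that
supports are well-ordered under the reverse order `>` of `Γ`). -/
noncomputable def tpow (y : Γ) (r : ℝ) : HahnSeries Γᵒᵈ ℝ :=
  HahnSeries.single (OrderDual.toDual y) r

/-- Truncation of a Hahn series at `γ`: keep exactly the coefficients at exponents `> γ`. -/
noncomputable def htrunc (x : HahnSeries Γᵒᵈ ℝ) (γ : Γ) : HahnSeries Γᵒᵈ ℝ where
  coeff g := if γ < OrderDual.ofDual g then x.coeff g else 0
  isPWO_support' := x.isPWO_support.mono (by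
    intro g hg
    simp only [Function.mem_support] at hg ⊢
    intro h
    simp [h] at hg)

/-- The leading coefficient of a Hahn series: its coefficient at the greatest
element of its support (`0` for the zero series). -/
noncomputable def leadCoeff (x : HahnSeries Γᵒᵈ ℝ) : ℝ :=
  letI := Classical.dec (x = 0)
  if h : x = 0 then 0
  else x.coeff (x.isWF_support.min (HahnSeries.support_nonempty_iff.2 h))

/-- A Hahn series is positive iff its leading coefficient is positive. -/
def HahnPos (x : HahnSeries Γᵒᵈ ℝ) : Prop := x ≠ 0 ∧ 0 < leadCoeff x

/-- The order type of the support of a Hahn series, well-ordered by the reverse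
order of `Γ`. -/
noncomputable def suppOrderType (x : HahnSeries Γᵒᵈ ℝ) : Ordinal :=
  @Ordinal.type x.support (fun a b => (a : Γᵒᵈ) < (b : Γᵒᵈ))
    { trichotomous := fun a b h1 h2 =>
        Subtype.ext (le_antisymm (not_lt.1 h2) (not_lt.1 h1))
      wf := x.isWF_support }

end Hahn

/-- The set of dyadic rational real numbers. -/
def Dyadics : Set ℝ := {x | ∃ (z : ℤ) (m : ℕ), x = z / 2 ^ m}

/-- `H` is an initial subgroup of `ℝ`: it is `{0}`, or `{z/2^m : z ∈ ℤ}` for some `m`,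
or it contains all dyadic rationals. -/
def IsInitialRealSubgroup (H : Set ℝ) : Prop :=
  H = {0} ∨ (∃ m : ℕ, H = {x : ℝ | ∃ z : ℤ, x = (z : ℝ) / 2 ^ m}) ∨ Dyadics ⊆ H

section Stmt17Aux
open Ordinal

variable {α : Type u} [LinearOrder α]

/-- The auxiliary tree relation: `y` extends the cut that `x` determines among
the elements enumerated (by a fixed well-order) before `x`. -/
def sAux (α : Type u) [LinearOrder α] : α → α → Prop := fun x y =>
  WellOrderingRel x y ∧ ∀ z, WellOrderingRel z x → (z < x ↔ z < y)

lemma sAux_irrefl (x : α) : ¬ sAux α x x := fun h => irrefl_of (@WellOrderingRel α) x h.1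

lemma sAux_trans {x y z : α} (h1 : sAux α x y) (h2 : sAux α y z) : sAux α x z :=
  ⟨IsTrans.trans _ _ _ h1.1 h2.1,
   fun w hw => (h1.2 w hw).trans (h2.2 w (IsTrans.trans _ _ _ hw h1.1))⟩

lemma sAux_comp {a b x : α} (ha : sAux α a x) (hb : sAux α b x) (hne : a ≠ b) :
    sAux α a b ∨ sAux α b a := by
  rcases trichotomous_of (@WellOrderingRel α) a b with h | h | h
  · exact Or.inl ⟨h, fun z hz => (ha.2 z hz).trans ((hb.2 z (IsTrans.trans _ _ _ hz h)).symm)⟩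
  · exact absurd h hne
  · exact Or.inr ⟨h, fun z hz => (hb.2 z hz).trans ((ha.2 z (IsTrans.trans _ _ _ hz h)).symm)⟩

lemma sAux_treeOrd : IsTreeOrd (sAux α) where
  irrefl := sAux_irrefl
  trans := sAux_trans
  predWO x :=
    { trichotomous := fun a b hn1 hn2 => by
        by_contra h
        rcases sAux_comp a.2 b.2 (fun hh => h (Subtype.ext hh)) with h' | h'
        · exact hn1 h'
        · exact hn2 h'
      wf := Subrelation.wf (fun {a b} h => h.1)
        (InvImage.wf Subtype.val (IsWellFounded.wf (r := @WellOrderingRel α))) }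

/-- Principal segment witnessing rank monotonicity. -/
noncomputable def sAuxPSeg {x y : α} (hxy : sAux α x y) :
    PrincipalSeg (fun (a b : treePred (sAux α) x) => sAux α a.1 b.1)
      (fun (a b : treePred (sAux α) y) => sAux α a.1 b.1) where
  toFun a := ⟨a.1, sAux_trans a.2 hxy⟩
  inj' a b h := by
    have h2 := congrArg Subtype.val h
    exact Subtype.ext h2
  map_rel_iff' := Iff.rfl
  top := ⟨x, hxy⟩
  mem_range_iff_rel' b := by
    constructor
    · rintro ⟨a, rfl⟩; exact a.2
    · intro hb; exact ⟨⟨b.1, hb⟩, Subtype.ext rfl⟩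

lemma treeRank_lt (h : IsTreeOrd (sAux α)) {x y : α} (hxy : sAux α x y) :
    treeRank (sAux α) h x < treeRank (sAux α) h y := by
  letI := h.predWO x
  letI := h.predWO y
  exact Ordinal.type_lt_iff.mpr ⟨sAuxPSeg hxy⟩

/-- A common predecessor of two comparable elements is not strictly between them. -/
lemma sAux_not_between {x a z : α} (hxa : sAux α x a) (hzx : sAux α z x) (hza : sAux α z a) :
    ¬ (x < z ∧ z < a ∨ a < z ∧ z < x) := by
  intro h
  have hiff := hxa.2 z hzx.1
  rcases h with ⟨h1, h2⟩ | ⟨h1, h2⟩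
  · exact absurd (hiff.mpr h2) (not_lt.mpr h1.le)
  · exact absurd (hiff.mp h2) (not_lt.mpr h1.le)

lemma sAux_crux {x a b z : α} (hxa : sAux α x a) (hxb : sAux α x b)
    (hza : sAux α z a) (hzb : sAux α z b) (hzx : sAux α z x)
    (hbet : a < z ∧ z < b ∨ b < z ∧ z < a) : False := by
  have hne : x ≠ z := fun he => sAux_irrefl z (he ▸ hzx)
  have h1 := sAux_not_between hxa hzx hza
  have h2 := sAux_not_between hxb hzx hzb
  rcases hbet with ⟨h3, h4⟩ | ⟨h3, h4⟩
  · have hnzx : ¬ z < x := fun hh => h1 (Or.inr ⟨h3, hh⟩)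
    exact h2 (Or.inl ⟨lt_of_le_of_ne (not_lt.mp hnzx) hne, h4⟩)
  · have hnzx : ¬ z < x := fun hh => h2 (Or.inr ⟨h3, hh⟩)
    exact h1 (Or.inl ⟨lt_of_le_of_ne (not_lt.mp hnzx) hne, h4⟩)

lemma sAux_forward {x y : α} (hr : WellOrderingRel x y) (hnxy : ¬ sAux α x y) :
    ∃ z, sAux α z x ∧ sAux α z y ∧ (x < z ∧ z < y ∨ y < z ∧ z < x) := by
  have hT : ∃ z, WellOrderingRel z x ∧ ¬ (z < x ↔ z < y) := by
    by_contra hc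
    push_neg at hc
    exact hnxy ⟨hr, fun z hz => (hc z hz)⟩
  set T : Set α := {z | WellOrderingRel z x ∧ ¬ (z < x ↔ z < y)} with hTdef
  have hTne : T.Nonempty := hT
  have wf := IsWellFounded.wf (r := @WellOrderingRel α)
  set z₀ := wf.min T hTne with hz₀def
  have hz₀ : z₀ ∈ T := wf.min_mem T hTne
  have hz0x : WellOrderingRel z₀ x := hz₀.1
  have hz0y : WellOrderingRel z₀ y := IsTrans.trans _ _ _ hz0x hr
  have hz0nx : z₀ ≠ x := fun he => irrefl_of (@WellOrderingRel α) x (he ▸ hz0x)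
  have hz0ny : z₀ ≠ y := fun he => irrefl_of (@WellOrderingRel α) y (he ▸ hz0y)
  have hbet : x < z₀ ∧ z₀ < y ∨ y < z₀ ∧ z₀ < x := by
    by_cases h1 : z₀ < x
    · have h2 : ¬ z₀ < y := fun hh => hz₀.2 (iff_of_true h1 hh)
      exact Or.inr ⟨lt_of_le_of_ne (not_lt.mp h2) (Ne.symm hz0ny), h1⟩
    · have h2 : z₀ < y := by
        by_contra hh
        exact hz₀.2 (iff_of_false h1 hh)
      exact Or.inl ⟨lt_of_le_of_ne (not_lt.mp h1) (Ne.symm hz0nx), h2⟩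
  have key : ∀ w, WellOrderingRel w z₀ → (w < z₀ ↔ w < x) ∧ (w < z₀ ↔ w < y) := by
    intro w hw
    have hwx : WellOrderingRel w x := IsTrans.trans _ _ _ hw hz0x
    have hiff : w < x ↔ w < y := by
      by_contra hc
      exact wf.not_lt_min T (⟨hwx, hc⟩ : w ∈ T) hw
    by_cases hwlt : w < x
    · have hwy := hiff.mp hwlt
      have hwz : w < z₀ := by
        rcases hbet with ⟨h1, h2⟩ | ⟨h1, h2⟩
        · exact lt_trans hwlt h1
        · exact lt_trans hwy h1
      exact ⟨iff_of_true hwz hwlt, iff_of_true hwz hwy⟩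
    · have hwy : ¬ w < y := fun hh => hwlt (hiff.mpr hh)
      have hwz : ¬ w < z₀ := by
        rcases hbet with ⟨h1, h2⟩ | ⟨h1, h2⟩
        · exact fun hc => hwy (lt_trans hc h2)
        · exact fun hc => hwlt (lt_trans hc h2)
      exact ⟨iff_of_false hwz hwlt, iff_of_false hwz hwy⟩
  exact ⟨z₀, ⟨hz0x, fun w hw => (key w hw).1⟩, ⟨hz0y, fun w hw => (key w hw).2⟩, hbet⟩

lemma sAux_lex (x y : α) (hne : x ≠ y) :
    ((¬ sAux α x y ∧ ¬ sAux α y x) ↔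
      ∃ z, sAux α z x ∧ sAux α z y ∧ (x < z ∧ z < y ∨ y < z ∧ z < x)) := by
  constructor
  · rintro ⟨h1, h2⟩
    rcases trichotomous_of (@WellOrderingRel α) x y with h | h | h
    · exact sAux_forward h h1
    · exact absurd h hne
    · obtain ⟨z, hzy, hzx, hb⟩ := sAux_forward h h2
      exact ⟨z, hzx, hzy, hb.symm⟩
  · rintro ⟨z, hzx, hzy, hb⟩
    exact ⟨fun hxy => sAux_not_between hxy hzx hzy hb,
           fun hyx => sAux_not_between hyx hzy hzx hb.symm⟩

lemma sAux_immSucc_between (h : IsTreeOrd (sAux α)) {x a b : α}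
    (ha : IsImmSucc (sAux α) h x a) (hb : IsImmSucc (sAux α) h x b) (hab : a ≠ b) :
    a < x ∧ x < b ∨ b < x ∧ x < a := by
  have hnab : ¬ sAux α a b := fun hh => by
    have := treeRank_lt h hh
    rw [ha.2, hb.2] at this
    exact lt_irrefl _ this
  have hnba : ¬ sAux α b a := fun hh => by
    have := treeRank_lt h hh
    rw [ha.2, hb.2] at this
    exact lt_irrefl _ this
  obtain ⟨z, hza, hzb, hbet⟩ := (sAux_lex a b hab).mp ⟨hnab, hnba⟩
  have hzr : treeRank (sAux α) h z ≤ treeRank (sAux α) h x := by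
    have := treeRank_lt h hza
    rw [ha.2, Ordinal.add_one_eq_succ] at this
    exact Order.lt_succ_iff.mp this
  by_cases hzx : z = x
  · subst hzx; exact hbet
  · rcases sAux_comp hza ha.1 hzx with h' | h'
    · exact absurd (sAux_crux ha.1 hb.1 hza hzb h' hbet) id
    · have := treeRank_lt h h'
      exact absurd hzr (not_le.mpr this)

lemma sAux_limit_no_max {C : Set α} (hC : IsLimitChain (sAux α) C) {w : α} (hw : w ∈ C) :
    ∃ x ∈ C, sAux α w x := by
  obtain ⟨hch, hwo, hlim⟩ := hC
  letI := hwo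
  set t : C → C → Prop := fun a b => sAux α a.1 b.1 with htdef
  have h1 : Ordinal.typein t ⟨w, hw⟩ + 1 < Ordinal.type t := by
    rw [Ordinal.add_one_eq_succ]
    exact hlim.succ_lt (Ordinal.typein_lt_type _ _)
  obtain ⟨a, ha⟩ := Ordinal.typein_surj t h1
  have h2 : Ordinal.typein t ⟨w, hw⟩ < Ordinal.typein t a := by
    rw [ha, Ordinal.add_one_eq_succ]
    exact Order.lt_succ _
  exact ⟨a.1, a.2, (Ordinal.typein_lt_typein t).mp h2⟩

lemma sAux_chain_succ_unique (h : IsTreeOrd (sAux α)) (C : Set α)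
    (hC : IsLimitChain (sAux α) C) (y z : α)
    (hy : IsChainImmSucc (sAux α) h C y) (hz : IsChainImmSucc (sAux α) h C z) : y = z := by
  by_contra hne
  have hreq : treeRank (sAux α) h y = treeRank (sAux α) h z := hy.2.unique hz.2
  have hnyz : ¬ sAux α y z := fun hh => by
    have := treeRank_lt h hh
    rw [hreq] at this
    exact lt_irrefl _ this
  have hnzy : ¬ sAux α z y := fun hh => by
    have := treeRank_lt h hh
    rw [hreq] at this
    exact lt_irrefl _ this
  obtain ⟨w, hwy, hwz, hbet⟩ := (sAux_lex y z hne).mp ⟨hnyz, hnzy⟩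
  have hrw : treeRank (sAux α) h w < treeRank (sAux α) h y := treeRank_lt h hwy
  have hnotS : ¬ ∀ x ∈ C, treeRank (sAux α) h x < treeRank (sAux α) h w := fun hmem =>
    absurd (hy.2.2 hmem) (not_le.mpr hrw)
  push_neg at hnotS
  obtain ⟨x, hxC, hxw⟩ := hnotS
  have hx0 : ∃ x0 ∈ C, sAux α w x0 := by
    by_cases hwx : w = x
    · exact sAux_limit_no_max hC (hwx ▸ hxC)
    · rcases sAux_comp hwy (hy.1 x hxC) hwx with h' | h'
      · exact ⟨x, hxC, h'⟩
      · exact absurd hxw (not_le.mpr (treeRank_lt h h'))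
  obtain ⟨x0, hx0C, hwx0⟩ := hx0
  exact sAux_crux (hy.1 x0 hx0C) (hz.1 x0 hx0C) hwy hwz hwx0 hbet

end Stmt17Aux

/-- Every linearly ordered set admits a partial order `<_s` making it a
lexicographically ordered binary tree. -/


theorem stmt17 (α : Type u) [LinearOrder α] :
    ∃ s : α → α → Prop, IsLexBinTree s := by
  refine ⟨sAux α, ?_⟩
  have hord : IsTreeOrd (sAux α) := sAux_treeOrd
  refine { toIsBinaryTree := { toIsTreeOrd := hord, succ_binary := ?_, chain_succ_unique := sAux_chain_succ_unique hord }, lex := sAux_lex }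
  intro x a b c ha hb hc
  by_cases hab : a = b
  · exact Or.inl hab
  by_cases hac : a = c
  · exact Or.inr (Or.inl hac)
  by_cases hbc : b = c
  · exact Or.inr (Or.inr hbc)
  exfalso
  rcases sAux_immSucc_between hord ha hb hab with ⟨h1, h2⟩ | ⟨h1, h2⟩ <;>
    rcases sAux_immSucc_between hord ha hc hac with ⟨h3, h4⟩ | ⟨h3, h4⟩ <;>
    rcases sAux_immSucc_between hord hb hc hbc with ⟨h5, h6⟩ | ⟨h5, h6⟩ <;>
    first
      | exact absurd h5 (lt_asymm h2)
      | exact absurd h5 (lt_asymm h4)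
      | exact absurd h4 (lt_asymm h1)
      | exact absurd h3 (lt_asymm h2)
      | exact absurd h6 (lt_asymm h3)
      | exact absurd h6 (lt_asymm h1)
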